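/- Let A be an n×n real matrix with A𝟙 ≥ 0 and A𝟙 ≠ 0, where 𝟙 is the all-ones vector. Suppose the negative off-diagonal part of A admits a decomposition A_a⁻ = A^z + A^s with A^z ≤ 0 and A^s ≤ 0 entrywise, and there is a diagonal matrix A_{d*} with positive diagonal entries and A_{d*} ≥ A_d entrywise such that: (1) (A_{d*} + A^z)𝟙 ≥ 0, (A_{d*} + A^z)𝟙 ≠ 0, and A_{d*} + A^z connects N⁰((A_{d*} + A^z)𝟙) with N⁺((A_{d*} + A^z)𝟙); (2) A_a⁺ ≤ A^z A_{d*}⁻¹ A^s entrywise; (3) A^z or A^s connects N⁰(A𝟙) with N⁺(A𝟙). Then A is invertible and A⁻¹ ≥ 0 entrywise. -/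

import Mathlib

open Matrix

/-- A real square matrix is a nonsingular M-matrix if its off-diagonal entries are
nonpositive, it is invertible, and all entries of its inverse are nonnegative. -/
def IsNonsingMMatrix {n : ℕ} (M : Matrix (Fin n) (Fin n) ℝ) : Prop :=
  (∀ i j, i ≠ j → M i j ≤ 0) ∧ IsUnit M.det ∧ ∀ i j, 0 ≤ M⁻¹ i j

/-- `A` connects `N1` with `N2`: from every index in `N1` there is a path of
nonzero entries of `A` of length `r ≥ 1` ending in `N2`. -/
def Connects {n : ℕ} (A : Matrix (Fin n) (Fin n) ℝ) (N1 N2 : Set (Fin n)) : Prop :=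
  ∀ i0 ∈ N1, ∃ r : ℕ, 1 ≤ r ∧ ∃ path : ℕ → Fin n, path 0 = i0 ∧ path r ∈ N2 ∧
    ∀ k, 1 ≤ k → k ≤ r → A (path (k - 1)) (path k) ≠ 0

/-- `N⁰(v)`, the set of indices where `v` vanishes. -/
def Nzero {n : ℕ} (v : Fin n → ℝ) : Set (Fin n) := {i | v i = 0}

/-- `N⁺(v)`, the set of indices where `v` is positive. -/
def Npos {n : ℕ} (v : Fin n → ℝ) : Set (Fin n) := {i | 0 < v i}

/-- Diagonal part `A_d` of a matrix. -/
noncomputable def diagPart {n : ℕ} (A : Matrix (Fin n) (Fin n) ℝ) : Matrix (Fin n) (Fin n) ℝ :=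
  Matrix.diagonal fun i => A i i

/-- Positive off-diagonal part `A_a⁺` of a matrix. -/
noncomputable def offDiagPos {n : ℕ} (A : Matrix (Fin n) (Fin n) ℝ) : Matrix (Fin n) (Fin n) ℝ :=
  Matrix.of fun i j => if i ≠ j ∧ 0 < A i j then A i j else 0

/-- Negative off-diagonal part `A_a⁻ = A - A_d - A_a⁺` of a matrix. -/
noncomputable def offDiagNeg {n : ℕ} (A : Matrix (Fin n) (Fin n) ℝ) : Matrix (Fin n) (Fin n) ℝ :=
  (A - diagPart A) - offDiagPos A

/-!
Write `B = A_{d*} + A^z`. The splitting hypothesis (2) gives the entrywise bound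
`A ≤ B A_{d*}⁻¹ (A_{d*} + A^s)`, and (1) makes `B` a monotone Z-matrix by the minimum principle.
It suffices to show that `A` is monotone (`A y ≥ 0 → y ≥ 0`). If not, shifting a
counterexample by a multiple of `𝟙` produces `d ≥ 0` with a zero entry and `A d ≥ μ A𝟙`, `μ > 0`.
The vector `w = A_{d*}⁻¹ (A_{d*} + A^s) d` satisfies `B w ≥ A d ≥ 0`, hence `w ≥ 0`, and a zero of
`w` sits at an index where `A𝟙` vanishes. Zeros of `w` spread along the edges of `A^z`, zeros
of `d` along those of `A^s`, and each zero of `d` is a zero of `w`; hypothesis (3) then carries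
a zero of `w` to an index where `A𝟙` is positive.
-/

section

variable {ι : Type*}

def IsZMatrix (T : Matrix ι ι ℝ) : Prop :=
  ∀ i j, i ≠ j → T i j ≤ 0

theorem isZMatrix_add {D E : Matrix ι ι ℝ} (hD : ∀ i j, i ≠ j → D i j = 0)
    (hE : ∀ i j, E i j ≤ 0) : IsZMatrix (D + E) := fun i j hij => by
  simpa [hD i j hij] using hE i j

theorem IsZMatrix.mul_nonpos {T : Matrix ι ι ℝ} {w : ι → ℝ} {i : ι} (hT : IsZMatrix T)
    (hw : 0 ≤ w) (hi : w i = 0) (j : ι) : T i j * w j ≤ 0 := by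
  rcases eq_or_ne i j with rfl | hij
  · simp [hi]
  · exact mul_nonpos_of_nonpos_of_nonneg (hT i j hij) (hw j)

variable [Fintype ι]

def IsMonotoneMatrix (T : Matrix ι ι ℝ) : Prop :=
  ∀ y : ι → ℝ, 0 ≤ T *ᵥ y → 0 ≤ y

namespace IsMonotoneMatrix

variable {T : Matrix ι ι ℝ}

theorem isUnit_det [DecidableEq ι] (hT : IsMonotoneMatrix T) : IsUnit T.det := by
  rw [isUnit_iff_ne_zero]
  intro h
  obtain ⟨x, hx, hTx⟩ := exists_mulVec_eq_zero_iff.2 h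
  have hx_nonneg : 0 ≤ x := hT x hTx.ge
  have hx_nonpos : 0 ≤ -x := hT (-x) (by rw [mulVec_neg, hTx, neg_zero])
  exact hx (le_antisymm (neg_nonneg.1 hx_nonpos) hx_nonneg)

theorem inv_nonneg [DecidableEq ι] (hT : IsMonotoneMatrix T) (i j : ι) : 0 ≤ T⁻¹ i j := by
  have hcol : T *ᵥ (T⁻¹ *ᵥ Pi.single j 1) = Pi.single j 1 := by
    rw [mulVec_mulVec, mul_nonsing_inv T hT.isUnit_det, one_mulVec]
  have := hT _ (hcol ▸ Pi.single_nonneg.2 zero_le_one) i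
  rwa [mulVec_single_one] at this

/-- A vector `y` with `T y ≥ 0` and a negative entry, shifted by `-(min y) • 𝟙`, is such a `d`. -/
theorem of_shift
    (h : ∀ (μ : ℝ) (d : ι → ℝ) (i : ι), 0 < μ → 0 ≤ d → d i = 0 → μ • T *ᵥ 1 ≤ T *ᵥ d → False) :
    IsMonotoneMatrix T := by
  intro y hy
  by_contra hneg
  obtain ⟨j, hj⟩ : ∃ j, y j < 0 := by simpa [Pi.le_def] using hneg
  obtain ⟨i, -, hi⟩ := Finset.exists_min_image Finset.univ y ⟨j, Finset.mem_univ j⟩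
  have hyi : y i < 0 := (hi j (Finset.mem_univ j)).trans_lt hj
  refine h (-y i) (y - y i • 1) i (neg_pos.2 hyi) (fun k => ?_) (by simp) ?_
  · simpa using hi k (Finset.mem_univ k)
  · rw [mulVec_sub, mulVec_smul, neg_smul, sub_eq_add_neg]
    exact le_add_of_nonneg_left hy

end IsMonotoneMatrix

namespace IsZMatrix

variable {T : Matrix ι ι ℝ} {w : ι → ℝ} {i : ι}

theorem mulVec_apply_nonpos (hT : IsZMatrix T) (hw : 0 ≤ w) (hi : w i = 0) :
    (T *ᵥ w) i ≤ 0 :=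
  Finset.sum_nonpos fun j _ => hT.mul_nonpos hw hi j

theorem eq_zero_of_mulVec_nonneg (hT : IsZMatrix T) (hw : 0 ≤ w) (hi : w i = 0)
    (hTw : 0 ≤ (T *ᵥ w) i) {j : ι} (hij : T i j ≠ 0) : w j = 0 := by
  have hsum : ∑ k, T i k * w k = 0 := le_antisymm (hT.mulVec_apply_nonpos hw hi) hTw
  have := (Finset.sum_eq_zero_iff_of_nonpos fun k _ => hT.mul_nonpos hw hi k).1 hsum j
    (Finset.mem_univ j)
  exact (mul_eq_zero.1 this).resolve_left hij

end IsZMatrix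

theorem eq_zero_of_add_mulVec_nonneg {D E : Matrix ι ι ℝ} {w : ι → ℝ} {i j : ι}
    (hD : ∀ i j, i ≠ j → D i j = 0) (hE : ∀ i j, E i j ≤ 0) (hw : 0 ≤ w) (hi : w i = 0)
    (hTw : 0 ≤ ((D + E) *ᵥ w) i) (hij : E i j ≠ 0) : w j = 0 := by
  rcases eq_or_ne i j with rfl | hne
  · exact hi
  · exact (isZMatrix_add hD hE).eq_zero_of_mulVec_nonneg hw hi hTw (by simpa [hD i j hne])

theorem mulVec_apply_of_offDiag_eq_zero {D : Matrix ι ι ℝ} (hD : ∀ i j, i ≠ j → D i j = 0)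
    (x : ι → ℝ) (i : ι) : (D *ᵥ x) i = D i i * x i :=
  Finset.sum_eq_single i (fun j _ hj => by simp [hD i j hj.symm]) (by simp)

variable [DecidableEq ι]

theorem isUnit_det_of_offDiag_eq_zero {D : Matrix ι ι ℝ} (hD : ∀ i j, i ≠ j → D i j = 0)
    (hpos : ∀ i, 0 < D i i) : IsUnit D.det := by
  have : D = diagonal fun i => D i i := by
    ext i j
    rcases eq_or_ne i j with rfl | hij
    · simp
    · simp [hD i j hij, hij]
  rw [this, det_diagonal]
  exact (Finset.prod_pos fun i _ => hpos i).ne'.isUnit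

theorem add_mul_inv_mul_add {D Z S : Matrix ι ι ℝ} (hD : IsUnit D.det) :
    (D + Z) * D⁻¹ * (D + S) = D + Z + S + Z * D⁻¹ * S := by
  simp only [add_mul, mul_add, mul_nonsing_inv _ hD, Matrix.mul_assoc, nonsing_inv_mul _ hD,
    Matrix.one_mul, Matrix.mul_one]
  abel

end

section Connects

variable {n : ℕ}

theorem Connects.exists_mem_of_forall {T : Matrix (Fin n) (Fin n) ℝ} {N₁ N₂ : Set (Fin n)}
    (hT : Connects T N₁ N₂) {P : Fin n → Prop} (hP : ∀ i j, P i → T i j ≠ 0 → P j)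
    {i : Fin n} (hi : i ∈ N₁) (hPi : P i) : ∃ j ∈ N₂, P j := by
  obtain ⟨r, -, p, hp0, hpr, hstep⟩ := hT i hi
  have hpath : ∀ k ≤ r, P (p k) := by
    intro k
    induction k with
    | zero => exact fun _ => hp0 ▸ hPi
    | succ k ih =>
      intro hk
      exact hP _ _ (ih (Nat.le_of_succ_le hk)) (hstep (k + 1) (Nat.le_add_left 1 k) hk)
  exact ⟨p r, hpr, hpath r le_rfl⟩

theorem IsZMatrix.isMonotoneMatrix {T : Matrix (Fin n) (Fin n) ℝ} (hT : IsZMatrix T)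
    (hrow : 0 ≤ T *ᵥ 1) (hconn : Connects T (Nzero (T *ᵥ 1)) (Npos (T *ᵥ 1))) :
    IsMonotoneMatrix T := by
  refine IsMonotoneMatrix.of_shift fun μ d i hμ hd hdi hTd => ?_
  have hrow_zero : ∀ j, d j = 0 → (T *ᵥ 1) j = 0 := fun j hj =>
    le_antisymm (nonpos_of_mul_nonpos_right ((hTd j).trans (hT.mulVec_apply_nonpos hd hj)) hμ)
      (hrow j)
  obtain ⟨j, hj, hdj⟩ := hconn.exists_mem_of_forall (P := fun j => d j = 0)
    (fun j _ hj hjk => hT.eq_zero_of_mulVec_nonneg hd hj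
      ((mul_nonneg hμ.le (hrow j)).trans (hTd j)) hjk)
    (hrow_zero i hdi) hdi
  exact (ne_of_gt hj) (hrow_zero j hdj)

end Connects

section Splitting

variable {n : ℕ} {A Az As Ads : Matrix (Fin n) (Fin n) ℝ}

theorem eq_diagPart_add_offDiagPos_add (hdecomp : offDiagNeg A = Az + As) :
    A = diagPart A + offDiagPos A + Az + As := by
  rw [add_assoc _ Az, ← hdecomp, offDiagNeg]
  abel

theorem factorization_sub_nonneg (hdecomp : offDiagNeg A = Az + As) (hAds : IsUnit Ads.det)
    (hge : ∀ i j, diagPart A i j ≤ Ads i j)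
    (h2 : ∀ i j, offDiagPos A i j ≤ (Az * Ads⁻¹ * As) i j) (i j : Fin n) :
    0 ≤ ((Ads + Az) * Ads⁻¹ * (Ads + As) - A) i j := by
  rw [add_mul_inv_mul_add hAds, eq_diagPart_add_offDiagPos_add hdecomp]
  simp only [Matrix.sub_apply, Matrix.add_apply]
  linarith [hge i j, h2 i j]

theorem isMonotoneMatrix_of_splitting (hrow : 0 ≤ A *ᵥ 1) (hAz : ∀ i j, Az i j ≤ 0)
    (hAs : ∀ i j, As i j ≤ 0) (hdiag : ∀ i j, i ≠ j → Ads i j = 0) (hdpos : ∀ i, 0 < Ads i i)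
    (hB : IsMonotoneMatrix (Ads + Az))
    (hN : ∀ i j, 0 ≤ ((Ads + Az) * Ads⁻¹ * (Ads + As) - A) i j)
    (h3 : Connects Az (Nzero (A *ᵥ 1)) (Npos (A *ᵥ 1)) ∨
      Connects As (Nzero (A *ᵥ 1)) (Npos (A *ᵥ 1))) :
    IsMonotoneMatrix A := by
  refine IsMonotoneMatrix.of_shift fun μ d i hμ hd hdi hAd => ?_
  set w := Ads⁻¹ *ᵥ (Ads + As) *ᵥ d
  have hBw : ∀ j, μ * (A *ᵥ 1) j ≤ ((Ads + Az) *ᵥ w) j := fun j => by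
    have hfactor : (Ads + Az) *ᵥ w = A *ᵥ d + ((Ads + Az) * Ads⁻¹ * (Ads + As) - A) *ᵥ d := by
      simp only [w, mulVec_mulVec, Matrix.mul_assoc, sub_mulVec, add_sub_cancel]
    have hNd : 0 ≤ (((Ads + Az) * Ads⁻¹ * (Ads + As) - A) *ᵥ d) j :=
      dotProduct_nonneg_of_nonneg (fun k => hN j k) hd
    have hAdj : μ * (A *ᵥ 1) j ≤ (A *ᵥ d) j := hAd j
    rw [hfactor, Pi.add_apply]
    linarith
  have hBw_nonneg : ∀ j, 0 ≤ ((Ads + Az) *ᵥ w) j := fun j =>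
    (mul_nonneg hμ.le (hrow j)).trans (hBw j)
  have hw : 0 ≤ w := hB w hBw_nonneg
  have hAds_w : ∀ j, Ads j j * w j = ((Ads + As) *ᵥ d) j := fun j => by
    rw [← mulVec_apply_of_offDiag_eq_zero hdiag, mulVec_mulVec,
      mul_nonsing_inv _ (isUnit_det_of_offDiag_eq_zero hdiag hdpos), one_mulVec]
  have hw_zero : ∀ j, d j = 0 → w j = 0 := fun j hj => by
    have := (isZMatrix_add hdiag hAs).mulVec_apply_nonpos hd hj
    rw [← hAds_w] at this
    exact le_antisymm (nonpos_of_mul_nonpos_right this (hdpos j)) (hw j)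
  have hrow_zero : ∀ j, w j = 0 → (A *ᵥ 1) j = 0 := fun j hj =>
    le_antisymm (nonpos_of_mul_nonpos_right
      ((hBw j).trans ((isZMatrix_add hdiag hAz).mulVec_apply_nonpos hw hj)) hμ) (hrow j)
  suffices ∃ j ∈ Npos (A *ᵥ 1), w j = 0 by
    obtain ⟨j, hj, hwj⟩ := this
    exact (ne_of_gt hj) (hrow_zero j hwj)
  have hi : i ∈ Nzero (A *ᵥ 1) := hrow_zero i (hw_zero i hdi)
  rcases h3 with hz | hs
  · exact hz.exists_mem_of_forall (fun j _ hj hjk =>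
      eq_zero_of_add_mulVec_nonneg hdiag hAz hw hj (hBw_nonneg j) hjk) hi (hw_zero i hdi)
  · obtain ⟨j, hj, hdj⟩ := hs.exists_mem_of_forall (P := fun j => d j = 0)
      (fun j _ hj hjk => eq_zero_of_add_mulVec_nonneg hdiag hAs hd hj
        (by rw [← hAds_w, hw_zero j hj, mul_zero]) hjk) hi hdi
    exact ⟨j, hj, hw_zero j hdj⟩

end Splitting

theorem relaxed_lorenz_with_ones_vector_general
    {n : ℕ} (A Az As Ads : Matrix (Fin n) (Fin n) ℝ)
    (hrow : ∀ i, 0 ≤ A.mulVec (fun _ => 1) i)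
    (hdecomp : offDiagNeg A = Az + As)
    (hAz : ∀ i j, Az i j ≤ 0) (hAs : ∀ i j, As i j ≤ 0)
    (hdiag : ∀ i j, i ≠ j → Ads i j = 0)
    (hdpos : ∀ i, 0 < Ads i i)
    (hge : ∀ i j, diagPart A i j ≤ Ads i j)
    (h1a : ∀ i, 0 ≤ (Ads + Az).mulVec (fun _ => 1) i)
    (h1c : Connects (Ads + Az) (Nzero ((Ads + Az).mulVec fun _ => 1))
      (Npos ((Ads + Az).mulVec fun _ => 1)))
    (h2 : ∀ i j, offDiagPos A i j ≤ (Az * Ads⁻¹ * As) i j)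
    (h3 : Connects Az (Nzero (A.mulVec fun _ => 1)) (Npos (A.mulVec fun _ => 1)) ∨
      Connects As (Nzero (A.mulVec fun _ => 1)) (Npos (A.mulVec fun _ => 1))) :
    IsUnit A.det ∧ ∀ i j, 0 ≤ A⁻¹ i j := by
  have hB : IsMonotoneMatrix (Ads + Az) := (isZMatrix_add hdiag hAz).isMonotoneMatrix h1a h1c
  have hN := factorization_sub_nonneg hdecomp (isUnit_det_of_offDiag_eq_zero hdiag hdpos) hge h2
  have hA : IsMonotoneMatrix A := isMonotoneMatrix_of_splitting hrow hAz hAs hdiag hdpos hB hN h3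
  exact ⟨hA.isUnit_det, hA.inv_nonneg⟩

theorem relaxed_lorenz_with_ones_vector
    {n : ℕ} (A Az As Ads : Matrix (Fin n) (Fin n) ℝ)
    (hrow : ∀ i, 0 ≤ A.mulVec (fun _ => 1) i)
    (hrow0 : A.mulVec (fun _ => 1) ≠ 0)
    (hdecomp : offDiagNeg A = Az + As)
    (hAz : ∀ i j, Az i j ≤ 0) (hAs : ∀ i j, As i j ≤ 0)
    (hdiag : ∀ i j, i ≠ j → Ads i j = 0)
    (hdpos : ∀ i, 0 < Ads i i)
    (hge : ∀ i j, diagPart A i j ≤ Ads i j)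
    (h1a : ∀ i, 0 ≤ (Ads + Az).mulVec (fun _ => 1) i)
    (h1b : (Ads + Az).mulVec (fun _ => 1) ≠ 0)
    (h1c : Connects (Ads + Az) (Nzero ((Ads + Az).mulVec fun _ => 1))
      (Npos ((Ads + Az).mulVec fun _ => 1)))
    (h2 : ∀ i j, offDiagPos A i j ≤ (Az * Ads⁻¹ * As) i j)
    (h3 : Connects Az (Nzero (A.mulVec fun _ => 1)) (Npos (A.mulVec fun _ => 1)) ∨
      Connects As (Nzero (A.mulVec fun _ => 1)) (Npos (A.mulVec fun _ => 1))) :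
    IsUnit A.det ∧ ∀ i j, 0 ≤ A⁻¹ i j :=
  relaxed_lorenz_with_ones_vector_general A Az As Ads hrow hdecomp hAz hAs hdiag hdpos hge h1a h1c
    h2 h3
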